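/- arXiv:1709.04779 — 2 statements merged into one kernel-verified Lean document; each statement's English description precedes it below -/
import Mathlib

section
/- Let f₁, f₂ be continuous real-valued functions on [t₀, t_k] that are polynomials on each subinterval [t_i, t_{i+1}] for a partition t₀ < t₁ < ... < t_k. If f₁(x)·f₂(x) = 0 for all x ∈ [t₀,t_k], f₁ ≢ 0 and f₂ ≢ 0, then there exist indices n₁ ≠ n₂ in {0,...,k-1} such that f₁ vanishes identically on [t_{n₁}, t_{n₁+1}] while f₂ does not, and f₂ vanishes identically on [t_{n₂}, t_{n₂+1}] while f₁ does not. In particular k ≥ 2. -/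
open Polynomial

theorem stmt_10 (k : ℕ) (hk : 1 ≤ k) (t : ℕ → ℝ)
    (ht : ∀ i, i < k → t i < t (i + 1))
    (f₁ f₂ : ℝ → ℝ)
    (hc₁ : ContinuousOn f₁ (Set.Icc (t 0) (t k)))
    (hc₂ : ContinuousOn f₂ (Set.Icc (t 0) (t k)))
    (hp₁ : ∀ i, i < k → ∃ p : Polynomial ℝ, ∀ x ∈ Set.Icc (t i) (t (i + 1)), f₁ x = p.eval x)
    (hp₂ : ∀ i, i < k → ∃ p : Polynomial ℝ, ∀ x ∈ Set.Icc (t i) (t (i + 1)), f₂ x = p.eval x)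
    (hprod : ∀ x ∈ Set.Icc (t 0) (t k), f₁ x * f₂ x = 0)
    (hne₁ : ¬ ∀ x ∈ Set.Icc (t 0) (t k), f₁ x = 0)
    (hne₂ : ¬ ∀ x ∈ Set.Icc (t 0) (t k), f₂ x = 0) :
    2 ≤ k ∧
    ∃ n₁ n₂, n₁ < k ∧ n₂ < k ∧ n₁ ≠ n₂ ∧
      (∀ x ∈ Set.Icc (t n₁) (t (n₁ + 1)), f₁ x = 0) ∧
      ¬ (∀ x ∈ Set.Icc (t n₁) (t (n₁ + 1)), f₂ x = 0) ∧
      (∀ x ∈ Set.Icc (t n₂) (t (n₂ + 1)), f₂ x = 0) ∧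
      ¬ (∀ x ∈ Set.Icc (t n₂) (t (n₂ + 1)), f₁ x = 0) := by
  classical
  -- monotonicity of t on 0..k
  have hmono : ∀ j, j ≤ k → ∀ i, i ≤ j → t i ≤ t j := by
    intro j
    induction j with
    | zero =>
      intro _ i hi
      obtain rfl : i = 0 := Nat.le_zero.mp hi
      exact le_rfl
    | succ n ih =>
      intro hn i hi
      rcases Nat.lt_succ_iff_lt_or_eq.mp (Nat.lt_succ_of_le hi) with h | h
      · exact le_trans (ih (Nat.le_of_succ_le hn) i (Nat.lt_succ_iff.mp h))
          (le_of_lt (ht n hn))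
      · exact le_of_eq (congrArg t h)
  -- each subinterval is contained in the big interval
  have hsub : ∀ i, i < k → Set.Icc (t i) (t (i + 1)) ⊆ Set.Icc (t 0) (t k) := by
    intro i hi x hx
    exact ⟨le_trans (hmono i (le_of_lt hi) 0 (Nat.zero_le _)) hx.1,
      le_trans hx.2 (hmono k le_rfl (i + 1) hi)⟩
  -- every point lies in some subinterval
  have hcov : ∀ x ∈ Set.Icc (t 0) (t k), ∃ i, i < k ∧ x ∈ Set.Icc (t i) (t (i + 1)) := by
    intro x hx
    set P : ℕ → Prop := fun i => t i ≤ x with hP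
    set i := Nat.findGreatest P k with hidef
    have hPi : P i := Nat.findGreatest_spec (Nat.zero_le k) hx.1
    have hik : i ≤ k := Nat.findGreatest_le k
    rcases eq_or_lt_of_le hik with h | h
    · -- i = k : x = t k, use k - 1
      have hxk : x = t k := le_antisymm hx.2 (h ▸ hPi)
      refine ⟨k - 1, Nat.sub_lt hk one_pos, ?_, ?_⟩
      · rw [hxk]; exact hmono k le_rfl (k - 1) (Nat.sub_le k 1)
      · have : k - 1 + 1 = k := Nat.succ_pred_eq_of_pos hk
        rw [hxk, this]
    · refine ⟨i, h, hPi, ?_⟩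
      have : ¬ P (i + 1) := Nat.findGreatest_is_greatest (Nat.lt_succ_self i) h
      exact le_of_not_ge this
  -- dichotomy on each subinterval
  have hdich : ∀ i, i < k →
      (∀ x ∈ Set.Icc (t i) (t (i + 1)), f₁ x = 0) ∨
      (∀ x ∈ Set.Icc (t i) (t (i + 1)), f₂ x = 0) := by
    intro i hi
    obtain ⟨p, hp⟩ := hp₁ i hi
    obtain ⟨q, hq⟩ := hp₂ i hi
    have hinf : (Set.Icc (t i) (t (i + 1))).Infinite := Set.Icc_infinite (ht i hi)
    have hroot : ∀ x ∈ Set.Icc (t i) (t (i + 1)), (p * q).IsRoot x := by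
      intro x hx
      have := hprod x (hsub i hi hx)
      simp only [IsRoot, eval_mul]
      rw [← hp x hx, ← hq x hx]
      exact this
    have hpq : p * q = 0 := by
      exact (p * q).eq_zero_of_infinite_isRoot (hinf.mono (fun x hx => hroot x hx))
    rcases mul_eq_zero.mp hpq with h | h
    · left; intro x hx; rw [hp x hx, h, eval_zero]
    · right; intro x hx; rw [hq x hx, h, eval_zero]
  -- find the witnesses
  push_neg at hne₁ hne₂
  obtain ⟨x₁, hx₁, hfx₁⟩ := hne₁
  obtain ⟨x₂, hx₂, hfx₂⟩ := hne₂
  obtain ⟨a, hak, hxa⟩ := hcov x₁ hx₁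
  obtain ⟨b, hbk, hxb⟩ := hcov x₂ hx₂
  -- on interval a, f₁ is not identically 0, so f₂ is
  have hAa : ¬ ∀ x ∈ Set.Icc (t a) (t (a + 1)), f₁ x = 0 := fun h => hfx₁ (h x₁ hxa)
  have hBb : ¬ ∀ x ∈ Set.Icc (t b) (t (b + 1)), f₂ x = 0 := fun h => hfx₂ (h x₂ hxb)
  have hBa : ∀ x ∈ Set.Icc (t a) (t (a + 1)), f₂ x = 0 := (hdich a hak).resolve_left hAa
  have hAb : ∀ x ∈ Set.Icc (t b) (t (b + 1)), f₁ x = 0 := (hdich b hbk).resolve_right hBb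
  have hab : b ≠ a := fun h => hAa (h ▸ hAb)
  refine ⟨?_, b, a, hbk, hak, hab, hAb, hBb, hBa, hAa⟩
  rcases Nat.lt_or_ge k 2 with h2 | h2
  · interval_cases k
    · omega
  · exact h2
end

section
/- Let t₀ < t₁ < ... < t_k and let T be the space of continuous functions on [t₀,t_k] that are polynomials of degree ≤ 2m on each [t_i, t_{i+1}] and C^{m-m_i} at each interior knot t_i (with 1 ≤ m_i ≤ m). If V denotes the corresponding degree-m spline space with knot multiplicities m_i, then {f² : f ∈ V|_{[t₀,t_k]}} spans T, i.e., span_ℝ(|V|²_{[t₀,t_k]}) = T. -/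
open Polynomial

noncomputable def tpow (c : ℝ) (n : ℕ) (x : ℝ) : ℝ := if c ≤ x then (x - c) ^ n else 0

lemma tpow_of_le {c x : ℝ} (h : c ≤ x) (n : ℕ) : tpow c n x = (x - c) ^ n := if_pos h

lemma tpow_of_ge {c x : ℝ} (h : x ≤ c) {n : ℕ} (hn : 1 ≤ n) : tpow c n x = 0 := by
  unfold tpow
  split
  · have hx : x = c := le_antisymm h (by assumption)
    subst hx
    simp [zero_pow (by omega : n ≠ 0)]
  · rfl

lemma tpow_mul (c x : ℝ) (a b : ℕ) : tpow c a x * (x - c) ^ b = tpow c (a + b) x := by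
  unfold tpow
  split
  · rw [← pow_add]
  · rw [zero_mul]

theorem stmt_16 (k m : ℕ) (hk : 1 ≤ k) (hm : 1 ≤ m) (t : ℕ → ℝ)
    (ht : ∀ i, i < k → t i < t (i + 1))
    (mi : ℕ → ℕ) (hmi : ∀ i, 1 ≤ i → i ≤ k - 1 → 1 ≤ mi i ∧ mi i ≤ m)
    (V T : Set (Set.Icc (t 0) (t k) → ℝ))
    (hVdef : V = {f | ∃ p : ℕ → Polynomial ℝ,
      (∀ i, i < k → (p i).natDegree ≤ m) ∧
      (∀ i, i < k → ∀ x : Set.Icc (t 0) (t k),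
        (x : ℝ) ∈ Set.Icc (t i) (t (i + 1)) → f x = (p i).eval (x : ℝ)) ∧
      (∀ i, 1 ≤ i → i < k → ∀ j ≤ m - mi i,
        (Polynomial.derivative^[j] (p (i - 1))).eval (t i) =
          (Polynomial.derivative^[j] (p i)).eval (t i))})
    (hTdef : T = {f | ∃ p : ℕ → Polynomial ℝ,
      (∀ i, i < k → (p i).natDegree ≤ 2 * m) ∧
      (∀ i, i < k → ∀ x : Set.Icc (t 0) (t k),
        (x : ℝ) ∈ Set.Icc (t i) (t (i + 1)) → f x = (p i).eval (x : ℝ)) ∧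
      (∀ i, 1 ≤ i → i < k → ∀ j ≤ m - mi i,
        (Polynomial.derivative^[j] (p (i - 1))).eval (t i) =
          (Polynomial.derivative^[j] (p i)).eval (t i))}) :
    Submodule.span ℝ {h : Set.Icc (t 0) (t k) → ℝ | ∃ f ∈ V, h = f * f} =
      Submodule.span ℝ T := by
  classical
  -- monotonicity of knots
  have tmono : ∀ i j : ℕ, i ≤ j → j ≤ k → t i ≤ t j := by
    intro i j hij hjk
    induction j with
    | zero =>
      have : i = 0 := by omega
      simp [this]
    | succ n ihn =>
      rcases Nat.eq_or_lt_of_le hij with h | h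
      · simp [h]
      · exact le_trans (ihn (by omega) (by omega)) (le_of_lt (ht n (by omega)))
  -- location of a point
  have hfind : ∀ x : ℝ, t 0 ≤ x → x ≤ t k → ∃ l, l < k ∧ t l ≤ x ∧ x ≤ t (l + 1) := by
    intro x hx0 hxk
    set l := Nat.findGreatest (fun i => t i ≤ x) (k - 1) with hl
    have hl1 : t l ≤ x :=
      Nat.findGreatest_spec (P := fun i => t i ≤ x) (Nat.zero_le _) hx0
    have hlk : l ≤ k - 1 := Nat.findGreatest_le _
    refine ⟨l, by omega, hl1, ?_⟩
    by_cases hcase : l = k - 1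
    · have : l + 1 = k := by omega
      rw [this]; exact hxk
    · have hng := Nat.findGreatest_is_greatest (P := fun i => t i ≤ x)
        (show l < l + 1 by omega) (show l + 1 ≤ k - 1 by omega)
      exact le_of_lt (not_le.mp hng)
  -- closure of V under addition
  have hVadd : ∀ g h, g ∈ V → h ∈ V → g + h ∈ V := by
    intro g h hg hh
    rw [hVdef] at hg hh ⊢
    obtain ⟨p, hp1, hp2, hp3⟩ := hg
    obtain ⟨q, hq1, hq2, hq3⟩ := hh
    refine ⟨fun i => p i + q i, fun i hi =>
      (natDegree_add_le _ _).trans (max_le (hp1 i hi) (hq1 i hi)),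
      fun i hi x hx => by
        simp [Pi.add_apply, hp2 i hi x hx, hq2 i hi x hx],
      fun i h1 h2 j hj => by
        rw [iterate_map_add, iterate_map_add, eval_add, eval_add,
          hp3 i h1 h2 j hj, hq3 i h1 h2 j hj]⟩
  -- squares are in the span
  set S : Set (Set.Icc (t 0) (t k) → ℝ) := {h | ∃ f ∈ V, h = f * f} with hS
  have hsq : ∀ g, g ∈ V → g * g ∈ Submodule.span ℝ S :=
    fun g hg => Submodule.subset_span ⟨g, hg, rfl⟩
  have hmul : ∀ g h, g ∈ V → h ∈ V → g * h ∈ Submodule.span ℝ S := by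
    intro g h hg hh
    have key : g * h = (2⁻¹ : ℝ) • ((g + h) * (g + h)) - (2⁻¹ : ℝ) • (g * g)
        - (2⁻¹ : ℝ) • (h * h) := by
      funext x
      simp only [Pi.sub_apply, Pi.smul_apply, Pi.mul_apply, Pi.add_apply, smul_eq_mul]
      ring
    rw [key]
    exact sub_mem (sub_mem (Submodule.smul_mem _ _ (hsq _ (hVadd g h hg hh)))
      (Submodule.smul_mem _ _ (hsq _ hg))) (Submodule.smul_mem _ _ (hsq _ hh))
  -- global polynomials of degree ≤ m are in V
  have hpolyV : ∀ q : ℝ[X], q.natDegree ≤ m →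
      (fun x : Set.Icc (t 0) (t k) => q.eval (x : ℝ)) ∈ V := by
    intro q hq
    rw [hVdef]
    exact ⟨fun _ => q, fun i _ => hq, fun i hi x hx => rfl, fun i h1 h2 j hj => rfl⟩
  -- truncated powers of exponent ≤ m are in V
  have htpV : ∀ i, 1 ≤ i → i ≤ k - 1 → ∀ a, m - mi i < a → a ≤ m →
      (fun x : Set.Icc (t 0) (t k) => tpow (t i) a x) ∈ V := by
    intro i hi1 hik a ha1 ha2
    rw [hVdef]
    refine ⟨fun l => if l < i then 0 else (X - C (t i)) ^ a, ?_, ?_, ?_⟩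
    · intro l hl
      dsimp only
      split
      · simp
      · exact natDegree_pow_le.trans (by simp [natDegree_X_sub_C]; omega)
    · intro l hl x hx
      dsimp only
      obtain ⟨hx1, hx2⟩ := hx
      by_cases hli : l < i
      · rw [if_pos hli, eval_zero,
          tpow_of_ge (le_trans hx2 (tmono (l + 1) i hli (by omega))) (by omega)]
      · rw [if_neg hli,
          tpow_of_le (le_trans (tmono i l (by omega) (by omega)) hx1)]
        simp
    · intro i' h1 h2 j hj
      dsimp only
      rcases lt_trichotomy i' i with hc | hc | hc
      · rw [if_pos (show i' - 1 < i by omega), if_pos hc]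
      · subst hc
        rw [if_pos (show i' - 1 < i' by omega), if_neg (lt_irrefl i')]
        rw [iterate_derivative_zero, eval_zero, iterate_derivative_X_sub_pow,
          eval_smul, eval_pow, eval_sub, eval_X, eval_C, sub_self,
          zero_pow (show a - j ≠ 0 by omega), smul_zero]
      · rw [if_neg (show ¬ i' - 1 < i by omega), if_neg (show ¬ i' < i by omega)]
  -- monomials of degree ≤ 2m are in the span
  have hmonoS : ∀ j, j ≤ 2 * m →
      (fun x : Set.Icc (t 0) (t k) => (x : ℝ) ^ j) ∈ Submodule.span ℝ S := by
    intro j hj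
    have key : (fun x : Set.Icc (t 0) (t k) => (x : ℝ) ^ j)
        = (fun x : Set.Icc (t 0) (t k) => ((X : ℝ[X]) ^ (min j m)).eval (x : ℝ))
          * (fun x : Set.Icc (t 0) (t k) => ((X : ℝ[X]) ^ (j - min j m)).eval (x : ℝ)) := by
      funext x
      simp only [Pi.mul_apply, eval_pow, eval_X, ← pow_add]
      congr 1
      omega
    rw [key]
    exact hmul _ _ (hpolyV _ (by rw [natDegree_X_pow]; omega))
      (hpolyV _ (by rw [natDegree_X_pow]; omega))
  -- truncated powers of exponent ≤ 2m are in the span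
  have htpS : ∀ i, 1 ≤ i → i ≤ k - 1 → ∀ j, m - mi i < j → j ≤ 2 * m →
      (fun x : Set.Icc (t 0) (t k) => tpow (t i) j x) ∈ Submodule.span ℝ S := by
    intro i h1 h2 j hj1 hj2
    have hmi' := hmi i h1 h2
    have key : (fun x : Set.Icc (t 0) (t k) => tpow (t i) j x)
        = (fun x : Set.Icc (t 0) (t k) => tpow (t i) (min j m) x)
          * (fun x : Set.Icc (t 0) (t k) => ((X - C (t i)) ^ (j - min j m)).eval (x : ℝ)) := by
      funext x
      simp only [Pi.mul_apply, eval_pow, eval_sub, eval_X, eval_C]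
      rw [tpow_mul]
      congr 1
      omega
    rw [key]
    exact hmul _ _ (htpV i h1 h2 _ (by omega) (min_le_right _ _))
      (hpolyV _ (natDegree_pow_le.trans (by simp [natDegree_X_sub_C]; omega)))
  apply le_antisymm
  · -- squares lie in T
    apply Submodule.span_le.mpr
    rintro h ⟨f, hf, rfl⟩
    rw [hVdef] at hf
    obtain ⟨p, hp1, hp2, hp3⟩ := hf
    apply Submodule.subset_span
    rw [hTdef]
    refine ⟨fun i => p i * p i, ?_, ?_, ?_⟩
    · intro i hi
      exact natDegree_mul_le.trans (by have := hp1 i hi; omega)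
    · intro i hi x hx
      simp [Pi.mul_apply, hp2 i hi x hx]
    · intro i h1 h2 j hj
      rw [iterate_derivative_mul, iterate_derivative_mul, eval_finset_sum, eval_finset_sum]
      apply Finset.sum_congr rfl
      intro l hl
      rw [Finset.mem_range] at hl
      rw [eval_smul, eval_smul, eval_mul, eval_mul,
        hp3 i h1 h2 (j - l) (le_trans (Nat.sub_le j l) hj),
        hp3 i h1 h2 l (le_trans (by omega) hj)]
  · -- T lies in the span of squares
    apply Submodule.span_le.mpr
    intro f hf
    rw [hTdef] at hf
    obtain ⟨p, hdeg, heval, hder⟩ := hf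
    rw [SetLike.mem_coe]
    -- the jump coefficients
    set c : ℕ → ℕ → ℝ := fun i j => (taylor (t i) (p i - p (i - 1))).coeff j with hc
    have hczero : ∀ i, 1 ≤ i → i < k → ∀ j, j ≤ m - mi i → c i j = 0 := by
      intro i h1 h2 j hj
      have h0 : (derivative^[j] (p i - p (i - 1))).eval (t i) = 0 := by
        rw [iterate_derivative_sub, eval_sub, hder i h1 h2 j hj, sub_self]
      have hfact : derivative^[j] (p i - p (i - 1))
          = (Nat.factorial j) • hasseDeriv j (p i - p (i - 1)) := by
        have h4 := congrFun (factorial_smul_hasseDeriv (R := ℝ) j) (p i - p (i - 1))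
        rw [LinearMap.smul_apply] at h4
        exact h4.symm
      rw [hfact, eval_smul, nsmul_eq_mul] at h0
      have : ((Nat.factorial j : ℝ)) ≠ 0 := by
        exact_mod_cast Nat.factorial_ne_zero j
      have h3 : (hasseDeriv j (p i - p (i - 1))).eval (t i) = 0 := by
        rcases mul_eq_zero.mp h0 with h | h
        · exact absurd h this
        · exact h
      rw [hc]
      simp only [taylor_coeff]
      exact h3
    -- main pointwise identity
    have hpt : ∀ x : Set.Icc (t 0) (t k), f x =
        (∑ j ∈ Finset.range (2 * m + 1), (p 0).coeff j * (x : ℝ) ^ j) +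
        ∑ i ∈ Finset.Icc 1 (k - 1), ∑ j ∈ Finset.Icc (m - mi i + 1) (2 * m),
          c i j * tpow (t i) j x := by
      intro x
      obtain ⟨hx0, hxk⟩ := x.2
      obtain ⟨l, hlk, hl1, hl2⟩ := hfind x hx0 hxk
      have hfx : f x = (p l).eval (x : ℝ) := heval l hlk x ⟨hl1, hl2⟩
      have htel : ∀ n, n ≤ k - 1 → (p n).eval (x : ℝ) = (p 0).eval (x : ℝ) +
          ∑ i ∈ Finset.Icc 1 n, ((p i).eval (x : ℝ) - (p (i - 1)).eval (x : ℝ)) := by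
        intro n
        induction n with
        | zero => simp
        | succ n ihn =>
          intro hn
          rw [Finset.sum_Icc_succ_top (by omega), ← add_assoc, ← ihn (by omega)]
          simp
      have hsum0 : (p 0).eval (x : ℝ)
          = ∑ j ∈ Finset.range (2 * m + 1), (p 0).coeff j * (x : ℝ) ^ j :=
        eval_eq_sum_range' (lt_of_le_of_lt (hdeg 0 (by omega)) (Nat.lt_succ_self _)) _
      have hDi : ∀ i, 1 ≤ i → i ≤ k - 1 → i ≤ l →
          ∑ j ∈ Finset.Icc (m - mi i + 1) (2 * m), c i j * tpow (t i) j x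
            = (p i).eval (x : ℝ) - (p (i - 1)).eval (x : ℝ) := by
        intro i h1 h2 hil
        have hti : t i ≤ x := le_trans (tmono i l hil (by omega)) hl1
        have step1 : ∑ j ∈ Finset.Icc (m - mi i + 1) (2 * m), c i j * tpow (t i) j x
            = ∑ j ∈ Finset.range (2 * m + 1), c i j * ((x : ℝ) - t i) ^ j := by
          rw [Finset.sum_congr rfl (fun j _ => by rw [tpow_of_le hti])]
          apply Finset.sum_subset
          · intro j hj
            rw [Finset.mem_Icc] at hj
            rw [Finset.mem_range]
            omega
          · intro j hjr hjn
            rw [Finset.mem_range] at hjr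
            rw [Finset.mem_Icc] at hjn
            rw [hczero i h1 (by omega) j (by omega), zero_mul]
        have step2 : ∑ j ∈ Finset.range (2 * m + 1), c i j * ((x : ℝ) - t i) ^ j
            = (taylor (t i) (p i - p (i - 1))).eval ((x : ℝ) - t i) := by
          rw [eval_eq_sum_range' (n := 2 * m + 1) _ ((x : ℝ) - t i)]
          rw [natDegree_taylor]
          exact lt_of_le_of_lt ((natDegree_sub_le _ _).trans
            (max_le (hdeg i (by omega)) (hdeg (i - 1) (by omega)))) (Nat.lt_succ_self _)
        rw [step1, step2, taylor_eval, sub_add_cancel, eval_sub]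
      have hDi0 : ∀ i, 1 ≤ i → i ≤ k - 1 → l < i →
          ∑ j ∈ Finset.Icc (m - mi i + 1) (2 * m), c i j * tpow (t i) j x = 0 := by
        intro i h1 h2 hli
        apply Finset.sum_eq_zero
        intro j hj
        rw [Finset.mem_Icc] at hj
        have hxi : (x : ℝ) ≤ t i := le_trans hl2 (tmono (l + 1) i hli (by omega))
        rw [tpow_of_ge hxi (by omega), mul_zero]
      have hsub : ∑ i ∈ Finset.Icc 1 (k - 1), ∑ j ∈ Finset.Icc (m - mi i + 1) (2 * m),
            c i j * tpow (t i) j x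
          = ∑ i ∈ Finset.Icc 1 l, ((p i).eval (x : ℝ) - (p (i - 1)).eval (x : ℝ)) := by
        rw [← Finset.sum_subset (Finset.Icc_subset_Icc_right (by omega : l ≤ k - 1))
          (fun i hi hni => by
            rw [Finset.mem_Icc] at hi
            rw [Finset.mem_Icc] at hni
            exact hDi0 i hi.1 hi.2 (by omega))]
        apply Finset.sum_congr rfl
        intro i hi
        rw [Finset.mem_Icc] at hi
        exact hDi i hi.1 (by omega) hi.2
      rw [hfx, htel l (by omega), hsum0, hsub]
    -- assemble
    have hfeq : f = (∑ j ∈ Finset.range (2 * m + 1),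
          (p 0).coeff j • (fun x : Set.Icc (t 0) (t k) => (x : ℝ) ^ j)) +
        ∑ i ∈ Finset.Icc 1 (k - 1), ∑ j ∈ Finset.Icc (m - mi i + 1) (2 * m),
          c i j • (fun x : Set.Icc (t 0) (t k) => tpow (t i) j x) := by
      funext x
      simp only [Pi.add_apply, Finset.sum_apply, Pi.smul_apply, smul_eq_mul]
      exact hpt x
    rw [hfeq]
    refine add_mem (Submodule.sum_mem _ fun j hj => Submodule.smul_mem _ _
      (hmonoS j (by rw [Finset.mem_range] at hj; omega)))
      (Submodule.sum_mem _ fun i hi => Submodule.sum_mem _ fun j hj =>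
        Submodule.smul_mem _ _ ?_)
    rw [Finset.mem_Icc] at hi hj
    exact htpS i hi.1 hi.2 j (by omega) hj.2
end
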